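/- There exists a unique (up to scalar) alternating trilinear form R on Sym^3(ℂ^3) such that R(l^3, m^3, n^3) = (det(l,m,n))^3 for all linear forms l, m, n on ℂ^3, where det(l,m,n) is the determinant of the 3×3 matrix of their coefficients. (Existence suffices: there is a well-defined alternating trilinear form with this property.) -/
import Mathlib


open MvPolynomial

/-- The cube of the linear form with coefficient vector `l`. -/
noncomputable def linCube (l : Fin 3 → ℂ) : MvPolynomial (Fin 3) ℂ :=
  (∑ i, C (l i) * X i) ^ 3

section Aux
open Finset Equiv

/-- The exponent multiset `{a,b,c}` as a `Finsupp`. -/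
noncomputable def deg (a b c : Fin 3) : Fin 3 →₀ ℕ :=
  Finsupp.single a 1 + Finsupp.single b 1 + Finsupp.single c 1

lemma coeff_linCube (l : Fin 3 → ℂ) (d : Fin 3 →₀ ℕ) :
    coeff d (linCube l) =
      ∑ a, ∑ b, ∑ c, if deg a b c = d then l a * l b * l c else 0 := by
  rw [linCube, pow_succ, pow_succ, pow_one]
  simp only [Finset.sum_mul, Finset.mul_sum, coeff_sum]
  refine Finset.sum_congr rfl fun a _ => Finset.sum_congr rfl fun b _ =>
    Finset.sum_congr rfl fun c _ => ?_
  have h : C (l c) * X c * (C (l b) * X b) * (C (l a) * X a)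
      = monomial (deg a b c) (l a * l b * l c) := by
    simp only [X, monomial_mul, C_mul_monomial, deg]
    ring_nf
    rw [show ((Finsupp.single c 1 + Finsupp.single b 1) + Finsupp.single a 1)
      = ((Finsupp.single a 1 + Finsupp.single b 1) + Finsupp.single c 1 : Fin 3 →₀ ℕ) by abel]
  rw [h, coeff_monomial]

lemma deg_eq_iff (a b c a' b' c' : Fin 3) :
    deg a b c = deg a' b' c' ↔ ∀ i : Fin 3,
      ((if a = i then 1 else 0) + (if b = i then 1 else 0) + (if c = i then 1 else 0) : ℕ)
        = (if a' = i then 1 else 0) + (if b' = i then 1 else 0) + (if c' = i then 1 else 0) := by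
  simp [deg, Finsupp.ext_iff, Finsupp.single_apply]

/-- The inverse multinomial weight: `(multiset {a,b,c})!/3!`. -/
noncomputable def w (a b c : Fin 3) : ℂ :=
  if a = b ∧ b = c then 1 else if a = b ∨ b = c ∨ a = c then 3⁻¹ else 6⁻¹

lemma key (l : Fin 3 → ℂ) (a b c : Fin 3) :
    w a b c * coeff (deg a b c) (linCube l) = l a * l b * l c := by
  fin_cases a <;> fin_cases b <;> fin_cases c <;>
    simp [coeff_linCube, Fin.sum_univ_three, w, deg_eq_iff, Fin.forall_fin_succ] <;> ring

/-- A trilinear form with `T(l³, m³, n³) = det(l,m,n)³`. -/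
noncomputable def T : MultilinearMap ℂ (fun _ : Fin 3 => MvPolynomial (Fin 3) ℂ) ℂ :=
  ∑ σ : Equiv.Perm (Fin 3), ∑ τ : Equiv.Perm (Fin 3), ∑ ρ : Equiv.Perm (Fin 3),
    (((Equiv.Perm.sign σ : ℤ) : ℂ) * ((Equiv.Perm.sign τ : ℤ) : ℂ)
        * ((Equiv.Perm.sign ρ : ℤ) : ℂ)) •
      (MultilinearMap.mkPiAlgebra ℂ (Fin 3) ℂ).compLinearMap
        (fun i => w (σ i) (τ i) (ρ i) • lcoeff ℂ (deg (σ i) (τ i) (ρ i)))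

lemma det_row (u : Fin 3 → Fin 3 → ℂ) :
    (Matrix.of u).det
      = ∑ σ : Equiv.Perm (Fin 3), ((Equiv.Perm.sign σ : ℤ) : ℂ) * ∏ i, u i (σ i) := by
  rw [← Matrix.det_transpose, Matrix.det_apply']
  rfl

lemma Tcubes (u : Fin 3 → (Fin 3 → ℂ)) :
    T (fun i => linCube (u i)) = (Matrix.of u).det ^ 3 := by
  rw [det_row, pow_succ, pow_succ, pow_one]
  simp only [Finset.sum_mul, Finset.mul_sum]
  simp only [T, MultilinearMap.sum_apply, MultilinearMap.smul_apply,
    MultilinearMap.compLinearMap_apply, MultilinearMap.mkPiAlgebra_apply,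
    LinearMap.smul_apply, lcoeff_apply, smul_eq_mul]
  refine Finset.sum_congr rfl fun σ _ => Finset.sum_congr rfl fun τ _ =>
    Finset.sum_congr rfl fun ρ _ => ?_
  simp only [Fin.prod_univ_three, key]
  ring

end Aux

/-- There exists an alternating trilinear form `R` on ternary cubics (here defined on all of
`MvPolynomial (Fin 3) ℂ`) with `R(l³, m³, n³) = det(l,m,n)³` for all linear forms `l,m,n`. -/
theorem stmt10 :
    ∃ R : AlternatingMap ℂ (MvPolynomial (Fin 3) ℂ) ℂ (Fin 3),
      ∀ l m n : Fin 3 → ℂ,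
        R ![linCube l, linCube m, linCube n] = (Matrix.of ![l, m, n]).det ^ 3 := by
  refine ⟨(6⁻¹ : ℂ) • MultilinearMap.alternatization T, fun l m n => ?_⟩
  have hv : ![linCube l, linCube m, linCube n] = fun j => linCube (![l, m, n] j) := by
    funext j; fin_cases j <;> rfl
  have hT : ∀ π : Equiv.Perm (Fin 3),
      T (fun i => ![linCube l, linCube m, linCube n] (π i))
        = (((Equiv.Perm.sign π : ℤ) : ℂ) * (Matrix.of ![l, m, n]).det) ^ 3 := by
    intro π
    have : (fun i => ![linCube l, linCube m, linCube n] (π i))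
        = fun i => linCube (![l, m, n] (π i)) := by
      rw [hv]
    rw [this, Tcubes]
    congr 1
    have : (Matrix.of fun i => ![l, m, n] (π i))
        = (Matrix.of ![l, m, n]).submatrix π id := rfl
    rw [this, Matrix.det_permute]
  rw [AlternatingMap.smul_apply, MultilinearMap.alternatization_apply]
  have : ∀ π : Equiv.Perm (Fin 3),
      Equiv.Perm.sign π • (T.domDomCongr π) ![linCube l, linCube m, linCube n]
        = (Matrix.of ![l, m, n]).det ^ 3 := by
    intro π
    rw [MultilinearMap.domDomCongr_apply, hT π]
    rcases Int.units_eq_one_or (Equiv.Perm.sign π) with h | h <;> simp [h] <;> ring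
  rw [Finset.sum_congr rfl fun π _ => this π, Finset.sum_const, Finset.card_univ]
  simp only [Fintype.card_perm, smul_eq_mul, smul_eq_mul]
  norm_num [Nat.factorial]
  ring
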